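/- Fix m ∈ (0,1) and q ∈ (0,1), and set y = (1−m)/m. For v ∈ (0, m(1−m)), define α(v) = m²(1−m)/v − m and R(v) = 1 − (1/B(α(v), y·α(v))) · ∫₀^q (1 − u/q) · u^{α(v)−1} (1−u)^{y·α(v)−1} du. Then R(v) is strictly decreasing in v on (0, m(1−m)). (This is the analytic core of Proposition 2: with the mean communication duration fixed, the beta-approximated data offloading ratio strictly increases as the variance of the communication duration decreases, and hence increases with the user moving speed.) -/

import Mathlib

open MeasureTheory Set

/-- The Euler Beta function `B(a,b) = ∫₀¹ t^(a-1) (1-t)^(b-1) dt`. -/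
noncomputable def eulerBeta (a b : ℝ) : ℝ :=
  ∫ t in (0:ℝ)..1, t ^ (a - 1) * (1 - t) ^ (b - 1)

/-- The moment-matched first beta shape parameter, for normalized mean `m`
and normalized variance `v`: `α(v) = m²(1-m)/v - m`. -/
noncomputable def alphaOf (m v : ℝ) : ℝ := m ^ 2 * (1 - m) / v - m

/-!
Write `f_a` for the beta density with shape parameters `(a, y a)`; all of them have mean
`1 / (1 + y)`, and `1 - R(v) = ∫₀^q (1 - u/q) f_{α(v)}(u) du` with `α` decreasing in `v`.
For `β < α` the ratio `f_α / f_β` is a multiple of the unimodal function `u^δ (1-u)^(yδ)`,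
`δ = α - β`, so `h = f_β - f_α` has sign pattern `+, -, +` on `(0, 1)`, while `∫ h = ∫ u h = 0`.
Hence `A x = ∫₀ˣ h` has sign pattern `+, -` and vanishes at `0` and `1`, and
`Ψ x = ∫₀ˣ (x - u) h(u) du`, whose derivative is `A`, rises and then falls between
`Ψ 0 = 0` and `Ψ 1 = 0`. So `Ψ q = q (∫₀^q (1 - u/q) f_β - ∫₀^q (1 - u/q) f_α) > 0`.
-/

open intervalIntegral

lemma strictMonoOn_Icc_of_hasDerivAt_pos {f f' : ℝ → ℝ} {a b : ℝ}
    (hf : ContinuousOn f (Icc a b)) (hf' : ∀ x ∈ Ioo a b, HasDerivAt f (f' x) x)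
    (hpos : ∀ x ∈ Ioo a b, 0 < f' x) : StrictMonoOn f (Icc a b) :=
  strictMonoOn_of_hasDerivWithinAt_pos (convex_Icc a b) hf
    (fun x hx => (hf' x (by rwa [interior_Icc] at hx)).hasDerivWithinAt)
    (fun x hx => hpos x (by rwa [interior_Icc] at hx))

lemma strictAntiOn_Icc_of_hasDerivAt_neg {f f' : ℝ → ℝ} {a b : ℝ}
    (hf : ContinuousOn f (Icc a b)) (hf' : ∀ x ∈ Ioo a b, HasDerivAt f (f' x) x)
    (hneg : ∀ x ∈ Ioo a b, f' x < 0) : StrictAntiOn f (Icc a b) :=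
  strictAntiOn_of_hasDerivWithinAt_neg (convex_Icc a b) hf
    (fun x hx => (hf' x (by rwa [interior_Icc] at hx)).hasDerivWithinAt)
    (fun x hx => hneg x (by rwa [interior_Icc] at hx))

lemma pos_of_strictMonoOn_of_strictAntiOn {f : ℝ → ℝ} {a s b : ℝ}
    (hmono : StrictMonoOn f (Icc a s)) (hanti : StrictAntiOn f (Icc s b))
    (ha : 0 ≤ f a) (hb : 0 ≤ f b) {x : ℝ} (hx : x ∈ Ioo a b) : 0 < f x := by
  rcases le_or_gt x s with hxs | hsx
  · exact ha.trans_lt (hmono ⟨le_rfl, hx.1.le.trans hxs⟩ ⟨hx.1.le, hxs⟩ hx.1)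
  · exact hb.trans_lt (hanti ⟨hsx.le, hx.2.le⟩ ⟨hsx.le.trans hx.2.le, le_rfl⟩ hx.2)

lemma exists_level_crossings_of_unimodal {g : ℝ → ℝ} {a m b c : ℝ}
    (hg : ContinuousOn g (Icc a b)) (hmono : StrictMonoOn g (Icc a m))
    (hanti : StrictAntiOn g (Icc m b)) (ham : a ≤ m) (hmb : m ≤ b)
    (ha : g a < c) (hb : g b < c) (hc : c < g m) :
    ∃ t₁ t₂, a < t₁ ∧ t₁ < t₂ ∧ t₂ < b ∧ (∀ u ∈ Ioo a t₁, g u < c) ∧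
      (∀ u ∈ Ioo t₁ t₂, c < g u) ∧ ∀ u ∈ Ioo t₂ b, g u < c := by
  obtain ⟨t₁, ht₁, hgt₁⟩ := intermediate_value_Ioo ham (hg.mono (Icc_subset_Icc le_rfl hmb))
    ⟨ha, hc⟩
  obtain ⟨t₂, ht₂, hgt₂⟩ := intermediate_value_Ioo' hmb (hg.mono (Icc_subset_Icc ham le_rfl))
    ⟨hb, hc⟩
  refine ⟨t₁, t₂, ht₁.1, ht₁.2.trans ht₂.1, ht₂.2, fun u hu => ?_, fun u hu => ?_,
    fun u hu => ?_⟩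
  · exact hgt₁ ▸ hmono ⟨hu.1.le, (hu.2.trans ht₁.2).le⟩ ⟨ht₁.1.le, ht₁.2.le⟩ hu.2
  · rcases le_or_gt u m with hum | hmu
    · exact hgt₁ ▸ hmono ⟨ht₁.1.le, ht₁.2.le⟩ ⟨(ht₁.1.trans hu.1).le, hum⟩ hu.1
    · exact hgt₂ ▸ hanti ⟨hmu.le, (hu.2.trans ht₂.2).le⟩ ⟨ht₂.1.le, ht₂.2.le⟩ hu.2
  · exact hgt₂ ▸ hanti ⟨ht₂.1.le, ht₂.2.le⟩ ⟨(ht₂.1.trans hu.1).le, hu.2.le⟩ hu.1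

lemma hasDerivAt_integral_of_continuousOn_Ioo {f : ℝ → ℝ} {a b x : ℝ}
    (hint : IntervalIntegrable f volume a b) (hcont : ContinuousOn f (Ioo a b))
    (hx : x ∈ Ioo a b) : HasDerivAt (fun t => ∫ u in a..t, f u) (f x) x :=
  integral_hasDerivAt_right (hint.mono_set (uIcc_subset_uIcc_left
      (by rw [uIcc_of_le (hx.1.trans hx.2).le]; exact Ioo_subset_Icc_self hx)))
    (hcont.stronglyMeasurableAtFilter isOpen_Ioo x hx)
    (hcont.continuousAt (Ioo_mem_nhds hx.1 hx.2))

lemma exists_pos_neg_of_strictMonoOn_of_strictAntiOn {f : ℝ → ℝ} {a t₁ t₂ b : ℝ}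
    (hmono₁ : StrictMonoOn f (Icc a t₁)) (hanti : StrictAntiOn f (Icc t₁ t₂))
    (hmono₂ : StrictMonoOn f (Icc t₂ b)) (hf : ContinuousOn f (Icc t₁ t₂))
    (ht₁ : a < t₁) (ht : t₁ < t₂) (ht₂ : t₂ < b) (ha : f a = 0) (hb : f b = 0) :
    ∃ s ∈ Ioo t₁ t₂, (∀ x ∈ Ioo a s, 0 < f x) ∧ ∀ x ∈ Ioo s b, f x < 0 := by
  obtain ⟨s, hs, hfs⟩ : ∃ s ∈ Ioo t₁ t₂, f s = 0 := by
    refine intermediate_value_Ioo' ht.le hf ⟨?_, ?_⟩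
    · exact hb ▸ hmono₂ ⟨le_rfl, ht₂.le⟩ ⟨ht₂.le, le_rfl⟩ ht₂
    · exact ha ▸ hmono₁ ⟨le_rfl, ht₁.le⟩ ⟨ht₁.le, le_rfl⟩ ht₁
  refine ⟨s, hs, fun x hx => ?_, fun x hx => neg_pos.mp ?_⟩
  · exact pos_of_strictMonoOn_of_strictAntiOn hmono₁
      (hanti.mono (Icc_subset_Icc le_rfl hs.2.le)) ha.ge hfs.ge hx
  · exact pos_of_strictMonoOn_of_strictAntiOn (f := fun x => -f x)
      (hanti.mono (Icc_subset_Icc hs.1.le le_rfl)).neg hmono₂.neg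
      (by simp [hfs]) (by simp [hb]) hx

lemma integral_lt_integral_of_lt_off_point {f g : ℝ → ℝ} {a b m : ℝ}
    (hf : IntervalIntegrable f volume a b) (hg : IntervalIntegrable g volume a b)
    (hm : m ∈ Ioo a b) (hlt : ∀ x ∈ Ioo a b, x ≠ m → f x < g x) :
    ∫ x in a..b, f x < ∫ x in a..b, g x := by
  have hsub : ∀ {c d}, c ∈ uIcc a b → d ∈ uIcc a b →
      IntervalIntegrable (fun x => g x - f x) volume c d := fun hc hd =>
    (hg.sub hf).mono_set (uIcc_subset_uIcc hc hd)
  have hmem : m ∈ uIcc a b := by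
    rw [uIcc_of_le (hm.1.trans hm.2).le]; exact Ioo_subset_Icc_self hm
  have hleft : 0 < ∫ x in a..m, g x - f x :=
    intervalIntegral_pos_of_pos_on (hsub left_mem_uIcc hmem)
      (fun x hx => sub_pos.mpr (hlt x ⟨hx.1, hx.2.trans hm.2⟩ hx.2.ne)) hm.1
  have hright : 0 < ∫ x in m..b, g x - f x :=
    intervalIntegral_pos_of_pos_on (hsub hmem right_mem_uIcc)
      (fun x hx => sub_pos.mpr (hlt x ⟨hm.1.trans hx.1, hx.2⟩ hx.1.ne')) hm.2
  have := integral_add_adjacent_intervals (hsub left_mem_uIcc hmem) (hsub hmem right_mem_uIcc)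
  rw [integral_sub hg hf] at this
  linarith

theorem integral_sub_mul_pos_of_sign_changes {h : ℝ → ℝ} {a b t₁ t₂ q : ℝ}
    (hint : IntervalIntegrable h volume a b) (hcont : ContinuousOn h (Ioo a b))
    (hmass : ∫ u in a..b, h u = 0) (hmoment : ∫ u in a..b, u * h u = 0)
    (ht₁ : a < t₁) (ht : t₁ < t₂) (ht₂ : t₂ < b)
    (hpos₁ : ∀ u ∈ Ioo a t₁, 0 < h u) (hneg : ∀ u ∈ Ioo t₁ t₂, h u < 0)
    (hpos₂ : ∀ u ∈ Ioo t₂ b, 0 < h u) (hq : q ∈ Ioo a b) :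
    0 < ∫ u in a..q, (q - u) * h u := by
  have hab : a ≤ b := (ht₁.trans (ht.trans ht₂)).le
  have huh : IntervalIntegrable (fun u => u * h u) volume a b :=
    hint.continuousOn_mul continuousOn_id
  set A : ℝ → ℝ := fun x => ∫ u in a..x, h u
  set G : ℝ → ℝ := fun x => ∫ u in a..x, u * h u
  have hAc : ContinuousOn A (Icc a b) := by
    simpa [uIcc_of_le hab] using continuousOn_primitive_interval' hint left_mem_uIcc
  have hGc : ContinuousOn G (Icc a b) := by
    simpa [uIcc_of_le hab] using continuousOn_primitive_interval' huh left_mem_uIcc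
  have hA' : ∀ x ∈ Ioo a b, HasDerivAt A (h x) x := fun x hx =>
    hasDerivAt_integral_of_continuousOn_Ioo hint hcont hx
  have hG' : ∀ x ∈ Ioo a b, HasDerivAt G (x * h x) x := fun x hx =>
    hasDerivAt_integral_of_continuousOn_Ioo huh (continuousOn_id.mul hcont) hx
  have hAa : A a = 0 := integral_same
  have hAb : A b = 0 := hmass
  obtain ⟨s, hs, hA_pos, hA_neg⟩ := exists_pos_neg_of_strictMonoOn_of_strictAntiOn
    (strictMonoOn_Icc_of_hasDerivAt_pos (hAc.mono (Icc_subset_Icc le_rfl (ht.trans ht₂).le))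
      (fun x hx => hA' x ⟨hx.1, hx.2.trans (ht.trans ht₂)⟩) hpos₁)
    (strictAntiOn_Icc_of_hasDerivAt_neg (hAc.mono (Icc_subset_Icc ht₁.le ht₂.le))
      (fun x hx => hA' x ⟨ht₁.trans hx.1, hx.2.trans ht₂⟩) hneg)
    (strictMonoOn_Icc_of_hasDerivAt_pos (hAc.mono (Icc_subset_Icc (ht₁.trans ht).le le_rfl))
      (fun x hx => hA' x ⟨(ht₁.trans ht).trans hx.1, hx.2⟩) hpos₂)
    (hAc.mono (Icc_subset_Icc ht₁.le ht₂.le)) ht₁ ht ht₂ hAa hAb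
  -- `Ψ x = ∫ u in a..x, (x - u) * h u` has derivative `A`
  set Ψ : ℝ → ℝ := fun x => x * A x - G x
  have hΨc : ContinuousOn Ψ (Icc a b) := (continuousOn_id.mul hAc).sub hGc
  have hΨ' : ∀ x ∈ Ioo a b, HasDerivAt Ψ (A x) x := fun x hx =>
    (((hasDerivAt_id x).mul (hA' x hx)).sub (hG' x hx)).congr_deriv (by simp)
  have hΨ_mono : StrictMonoOn Ψ (Icc a s) :=
    strictMonoOn_Icc_of_hasDerivAt_pos (hΨc.mono (Icc_subset_Icc le_rfl (hs.2.trans ht₂).le))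
      (fun x hx => hΨ' x ⟨hx.1, hx.2.trans (hs.2.trans ht₂)⟩) hA_pos
  have hΨ_anti : StrictAntiOn Ψ (Icc s b) :=
    strictAntiOn_Icc_of_hasDerivAt_neg (hΨc.mono (Icc_subset_Icc (ht₁.trans hs.1).le le_rfl))
      (fun x hx => hΨ' x ⟨(ht₁.trans hs.1).trans hx.1, hx.2⟩) hA_neg
  have hΨq : Ψ q = ∫ u in a..q, (q - u) * h u := by
    have hsub : uIcc a q ⊆ uIcc a b := uIcc_subset_uIcc_left
      (by rw [uIcc_of_le hab]; exact Ioo_subset_Icc_self hq)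
    simp_rw [Ψ, A, G, sub_mul]
    rw [integral_sub ((hint.mono_set hsub).const_mul q) (huh.mono_set hsub),
      intervalIntegral.integral_const_mul]
  rw [← hΨq]
  exact pos_of_strictMonoOn_of_strictAntiOn hΨ_mono hΨ_anti (by simp [Ψ, hAa, G])
    (by simp [Ψ, hAb, G, hmoment]) hq

lemma continuous_rpow_mul_one_sub_rpow {a b : ℝ} (ha : 0 ≤ a) (hb : 0 ≤ b) :
    Continuous fun u : ℝ => u ^ a * (1 - u) ^ b :=
  (Real.continuous_rpow_const ha).mul
    ((Real.continuous_rpow_const hb).comp (continuous_const.sub continuous_id))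

lemma hasDerivAt_rpow_mul_one_sub_rpow {a b u : ℝ} (hu : u ∈ Ioo 0 1) :
    HasDerivAt (fun u : ℝ => u ^ a * (1 - u) ^ b)
      ((a - (a + b) * u) * (u ^ (a - 1) * (1 - u) ^ (b - 1))) u := by
  have h1u : 0 < 1 - u := sub_pos.mpr hu.2
  have hl : HasDerivAt (fun u : ℝ => u ^ a) (a * u ^ (a - 1)) u :=
    Real.hasDerivAt_rpow_const (Or.inl hu.1.ne')
  have hr : HasDerivAt (fun u : ℝ => (1 - u) ^ b) (b * (1 - u) ^ (b - 1) * -1) u :=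
    (Real.hasDerivAt_rpow_const (p := b) (Or.inl h1u.ne')).comp u
      ((hasDerivAt_id u).const_sub 1)
  refine (hl.mul hr).congr_deriv ?_
  have ea : u ^ a = u ^ (a - 1) * u := by rw [← Real.rpow_add_one hu.1.ne', sub_add_cancel]
  have eb : (1 - u) ^ b = (1 - u) ^ (b - 1) * (1 - u) := by
    rw [← Real.rpow_add_one h1u.ne', sub_add_cancel]
  rw [ea, eb]
  ring

lemma strictMonoOn_rpow_mul_one_sub_rpow {a b : ℝ} (ha : 0 < a) (hb : 0 < b) :
    StrictMonoOn (fun u : ℝ => u ^ a * (1 - u) ^ b) (Icc 0 (a / (a + b))) := by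
  have hmode : a / (a + b) < 1 := (div_lt_one (by positivity)).mpr (by linarith)
  refine strictMonoOn_Icc_of_hasDerivAt_pos
    (continuous_rpow_mul_one_sub_rpow ha.le hb.le).continuousOn
    (fun u hu => hasDerivAt_rpow_mul_one_sub_rpow ⟨hu.1, hu.2.trans hmode⟩) fun u hu => ?_
  have h1u : 0 < 1 - u := by linarith [hu.2.trans hmode]
  have hlin : 0 < a - (a + b) * u := by
    have := (lt_div_iff₀ (by positivity)).mp hu.2
    linarith
  have := hu.1
  positivity

lemma strictAntiOn_rpow_mul_one_sub_rpow {a b : ℝ} (ha : 0 < a) (hb : 0 < b) :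
    StrictAntiOn (fun u : ℝ => u ^ a * (1 - u) ^ b) (Icc (a / (a + b)) 1) := by
  have hmode : 0 < a / (a + b) := by positivity
  refine strictAntiOn_Icc_of_hasDerivAt_neg
    (continuous_rpow_mul_one_sub_rpow ha.le hb.le).continuousOn
    (fun u hu => hasDerivAt_rpow_mul_one_sub_rpow ⟨hmode.trans hu.1, hu.2⟩) fun u hu => ?_
  have hu0 : 0 < u := hmode.trans hu.1
  have h1u : 0 < 1 - u := sub_pos.mpr hu.2
  have hlin : a - (a + b) * u < 0 := by
    have := (div_lt_iff₀ (by positivity)).mp hu.1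
    linarith
  exact mul_neg_of_neg_of_pos hlin (by positivity)

lemma intervalIntegrable_rpow_mul_one_sub_rpow {a b : ℝ} (ha : 0 < a) (hb : 0 < b) :
    IntervalIntegrable (fun u : ℝ => u ^ (a - 1) * (1 - u) ^ (b - 1)) volume 0 1 := by
  -- near `0` only the first factor is singular; the half near `1` follows by `u ↦ 1 - u`
  have hhalf : ∀ {a b : ℝ}, 0 < a →
      IntervalIntegrable (fun u : ℝ => u ^ (a - 1) * (1 - u) ^ (b - 1)) volume 0 (1 / 2) := by
    intro a b ha
    refine (intervalIntegrable_rpow' (by linarith)).mul_continuousOn ?_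
    refine (continuousOn_const.sub continuousOn_id).rpow_const fun u hu => Or.inl ?_
    rw [uIcc_of_le (by norm_num)] at hu
    show (1:ℝ) - u ≠ 0
    linarith [hu.2]
  have hright := (hhalf (b := a) hb).comp_sub_left 1
  norm_num at hright
  refine (hhalf ha).trans ?_
  simpa only [mul_comm] using hright.symm

lemma eulerBeta_pos {a b : ℝ} (ha : 0 < a) (hb : 0 < b) : 0 < eulerBeta a b :=
  intervalIntegral_pos_of_pos_on (intervalIntegrable_rpow_mul_one_sub_rpow ha hb)
    (fun _ hu => mul_pos (Real.rpow_pos_of_pos hu.1 _)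
      (Real.rpow_pos_of_pos (sub_pos.mpr hu.2) _)) one_pos

lemma integral_id_mul_rpow_mul_one_sub_rpow {a b : ℝ} (ha : 0 < a) (hb : 0 < b) :
    ∫ u in (0:ℝ)..1, u * (u ^ (a - 1) * (1 - u) ^ (b - 1)) = a / (a + b) * eulerBeta a b := by
  have hK := intervalIntegrable_rpow_mul_one_sub_rpow ha hb
  have huK : IntervalIntegrable (fun u : ℝ => u * (u ^ (a - 1) * (1 - u) ^ (b - 1)))
      volume 0 1 := hK.continuousOn_mul continuousOn_id
  -- `u ^ a * (1 - u) ^ b` vanishes at both ends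
  have hFTC : ∫ u in (0:ℝ)..1, (a - (a + b) * u) * (u ^ (a - 1) * (1 - u) ^ (b - 1)) = 0 := by
    rw [integral_eq_sub_of_hasDerivAt_of_le zero_le_one
      (continuous_rpow_mul_one_sub_rpow ha.le hb.le).continuousOn
      (fun u hu => hasDerivAt_rpow_mul_one_sub_rpow hu)
      (hK.continuousOn_mul (by fun_prop))]
    simp [Real.zero_rpow ha.ne', Real.zero_rpow hb.ne']
  simp_rw [sub_mul, mul_assoc] at hFTC
  rw [integral_sub (hK.const_mul a) (huK.const_mul (a + b)),
    intervalIntegral.integral_const_mul, intervalIntegral.integral_const_mul] at hFTC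
  rw [eulerBeta, div_mul_eq_mul_div, eq_div_iff (by positivity)]
  linarith

noncomputable def betaDensity (a b u : ℝ) : ℝ := u ^ (a - 1) * (1 - u) ^ (b - 1) / eulerBeta a b

section betaDensity

variable {a b : ℝ}

lemma betaDensity_pos (ha : 0 < a) (hb : 0 < b) {u : ℝ} (hu : u ∈ Ioo 0 1) :
    0 < betaDensity a b u :=
  div_pos (mul_pos (Real.rpow_pos_of_pos hu.1 _) (Real.rpow_pos_of_pos (sub_pos.mpr hu.2) _))
    (eulerBeta_pos ha hb)

lemma continuousOn_betaDensity : ContinuousOn (betaDensity a b) (Ioo 0 1) :=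
  ((continuousOn_id.rpow_const fun _ hu => Or.inl hu.1.ne').mul
    ((continuousOn_const.sub continuousOn_id).rpow_const fun _ hu =>
      Or.inl (sub_pos.mpr hu.2).ne')).div_const _

lemma intervalIntegrable_betaDensity (ha : 0 < a) (hb : 0 < b) :
    IntervalIntegrable (betaDensity a b) volume 0 1 :=
  (intervalIntegrable_rpow_mul_one_sub_rpow ha hb).div_const _

lemma integral_betaDensity (ha : 0 < a) (hb : 0 < b) :
    ∫ u in (0:ℝ)..1, betaDensity a b u = 1 := by
  simp only [betaDensity]
  rw [intervalIntegral.integral_div]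
  exact div_self (eulerBeta_pos ha hb).ne'

lemma integral_id_mul_betaDensity (ha : 0 < a) (hb : 0 < b) :
    ∫ u in (0:ℝ)..1, u * betaDensity a b u = a / (a + b) := by
  simp_rw [betaDensity, mul_div_assoc']
  rw [intervalIntegral.integral_div, integral_id_mul_rpow_mul_one_sub_rpow ha hb,
    mul_div_cancel_right₀ _ (eulerBeta_pos ha hb).ne']

lemma integral_mul_betaDensity (f : ℝ → ℝ) (q : ℝ) :
    ∫ u in (0:ℝ)..q, f u * betaDensity a b u
      = 1 / eulerBeta a b * ∫ u in (0:ℝ)..q, f u * u ^ (a - 1) * (1 - u) ^ (b - 1) := by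
  rw [← intervalIntegral.integral_const_mul]
  congr 1 with u
  simp only [betaDensity]
  ring

lemma betaDensity_add_eq_mul_div {c d u : ℝ} (hu : u ∈ Ioo 0 1) (hB : eulerBeta a b ≠ 0) :
    betaDensity (a + c) (b + d) u
      = betaDensity a b u * (u ^ c * (1 - u) ^ d / (eulerBeta (a + c) (b + d) / eulerBeta a b)) := by
  simp only [betaDensity]
  rw [show a + c - 1 = (a - 1) + c by ring, show b + d - 1 = (b - 1) + d by ring,
    Real.rpow_add hu.1, Real.rpow_add (sub_pos.mpr hu.2)]
  generalize eulerBeta a b = B at hB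
  generalize eulerBeta (a + c) (b + d) = B'
  rcases eq_or_ne B' 0 with rfl | hB'
  · simp
  · field_simp

end betaDensity

lemma exists_sign_changes_betaDensity_sub {y α β : ℝ} (hy : 0 < y) (hβ : 0 < β)
    (hβα : β < α) :
    ∃ t₁ t₂, 0 < t₁ ∧ t₁ < t₂ ∧ t₂ < 1 ∧
      (∀ u ∈ Ioo 0 t₁, betaDensity α (y * α) u < betaDensity β (y * β) u) ∧
      (∀ u ∈ Ioo t₁ t₂, betaDensity β (y * β) u < betaDensity α (y * α) u) ∧
      ∀ u ∈ Ioo t₂ 1, betaDensity α (y * α) u < betaDensity β (y * β) u := by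
  have hα : 0 < α := hβ.trans hβα
  set δ := α - β
  have hδ : 0 < δ := sub_pos.mpr hβα
  have hyδ : 0 < y * δ := mul_pos hy hδ
  set g : ℝ → ℝ := fun u => u ^ δ * (1 - u) ^ (y * δ)
  have hB₁ : 0 < eulerBeta β (y * β) := eulerBeta_pos hβ (mul_pos hy hβ)
  have hB₂ : 0 < eulerBeta α (y * α) := eulerBeta_pos hα (mul_pos hy hα)
  set c := eulerBeta α (y * α) / eulerBeta β (y * β)
  have hc : 0 < c := div_pos hB₂ hB₁
  have hβpos := fun {u} (hu : u ∈ Ioo (0:ℝ) 1) => betaDensity_pos hβ (mul_pos hy hβ) hu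
  have hratio : ∀ u ∈ Ioo (0:ℝ) 1,
      betaDensity α (y * α) u = betaDensity β (y * β) u * (g u / c) := fun u hu => by
    have := betaDensity_add_eq_mul_div (c := δ) (d := y * δ) hu hB₁.ne'
    rwa [← mul_add, add_sub_cancel] at this
  have hlt_iff : ∀ u ∈ Ioo (0:ℝ) 1,
      betaDensity α (y * α) u < betaDensity β (y * β) u ↔ g u < c := fun u hu => by
    rw [hratio u hu, mul_lt_iff_lt_one_right (hβpos hu), div_lt_one hc]
  have hgt_iff : ∀ u ∈ Ioo (0:ℝ) 1,
      betaDensity β (y * β) u < betaDensity α (y * α) u ↔ c < g u := fun u hu => by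
    rw [hratio u hu, lt_mul_iff_one_lt_right (hβpos hu), one_lt_div hc]
  set m := δ / (δ + y * δ)
  have hm : m ∈ Ioo (0:ℝ) 1 := ⟨by positivity, (div_lt_one (by positivity)).mpr (by linarith)⟩
  have hg_mono : StrictMonoOn g (Icc 0 m) := strictMonoOn_rpow_mul_one_sub_rpow hδ hyδ
  have hg_anti : StrictAntiOn g (Icc m 1) := strictAntiOn_rpow_mul_one_sub_rpow hδ hyδ
  -- otherwise `betaDensity α` would lie below `betaDensity β` off `m`, contradicting equal masses
  have hcm : c < g m := by
    by_contra! hle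
    have hlt := integral_lt_integral_of_lt_off_point
      (intervalIntegrable_betaDensity hα (mul_pos hy hα))
      (intervalIntegrable_betaDensity hβ (mul_pos hy hβ)) hm fun u hu hne => by
        refine (hlt_iff u hu).mpr (lt_of_lt_of_le ?_ hle)
        rcases hne.lt_or_gt with hum | hmu
        · exact hg_mono ⟨hu.1.le, hum.le⟩ ⟨hm.1.le, le_rfl⟩ hum
        · exact hg_anti ⟨le_rfl, hm.2.le⟩ ⟨hmu.le, hu.2.le⟩ hmu
    rw [integral_betaDensity hα (mul_pos hy hα), integral_betaDensity hβ (mul_pos hy hβ)] at hlt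
    exact hlt.false
  obtain ⟨t₁, t₂, ht₁, ht, ht₂, hbelow₁, habove, hbelow₂⟩ :=
    exists_level_crossings_of_unimodal (continuous_rpow_mul_one_sub_rpow hδ.le hyδ.le).continuousOn
      hg_mono hg_anti hm.1.le hm.2.le (by simpa [g, Real.zero_rpow hδ.ne'] using hc)
      (by simpa [g, Real.zero_rpow hyδ.ne'] using hc) hcm
  refine ⟨t₁, t₂, ht₁, ht, ht₂, fun u hu => ?_, fun u hu => ?_, fun u hu => ?_⟩
  · exact (hlt_iff u ⟨hu.1, hu.2.trans (ht.trans ht₂)⟩).mpr (hbelow₁ u hu)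
  · exact (hgt_iff u ⟨ht₁.trans hu.1, hu.2.trans ht₂⟩).mpr (habove u hu)
  · exact (hlt_iff u ⟨(ht₁.trans ht).trans hu.1, hu.2⟩).mpr (hbelow₂ u hu)

theorem integral_mul_betaDensity_lt_of_lt {y α β q : ℝ} (hy : 0 < y) (hβ : 0 < β)
    (hβα : β < α) (hq : q ∈ Ioo 0 1) :
    ∫ u in (0:ℝ)..q, (1 - u / q) * betaDensity α (y * α) u
      < ∫ u in (0:ℝ)..q, (1 - u / q) * betaDensity β (y * β) u := by
  have hα : 0 < α := hβ.trans hβα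
  have hiα := intervalIntegrable_betaDensity hα (mul_pos hy hα)
  have hiβ := intervalIntegrable_betaDensity hβ (mul_pos hy hβ)
  set h : ℝ → ℝ := fun u => betaDensity β (y * β) u - betaDensity α (y * α) u
  have hmass : ∫ u in (0:ℝ)..1, h u = 0 := by
    rw [integral_sub hiβ hiα, integral_betaDensity hβ (mul_pos hy hβ),
      integral_betaDensity hα (mul_pos hy hα), sub_self]
  -- both densities have mean `1 / (1 + y)`
  have hmoment : ∫ u in (0:ℝ)..1, u * h u = 0 := by
    have huβ : IntervalIntegrable (fun u => u * betaDensity β (y * β) u) volume 0 1 :=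
      hiβ.continuousOn_mul continuousOn_id
    have huα : IntervalIntegrable (fun u => u * betaDensity α (y * α) u) volume 0 1 :=
      hiα.continuousOn_mul continuousOn_id
    simp_rw [h, mul_sub]
    rw [integral_sub huβ huα,
      integral_id_mul_betaDensity hβ (mul_pos hy hβ), integral_id_mul_betaDensity hα (mul_pos hy hα),
      sub_eq_zero, div_eq_div_iff (by positivity) (by positivity)]
    ring
  obtain ⟨t₁, t₂, ht₁, ht, ht₂, hbelow₁, habove, hbelow₂⟩ :=
    exists_sign_changes_betaDensity_sub hy hβ hβα
  have hpos : 0 < ∫ u in (0:ℝ)..q, (q - u) * h u :=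
    integral_sub_mul_pos_of_sign_changes (hiβ.sub hiα)
      (continuousOn_betaDensity.sub continuousOn_betaDensity) hmass hmoment ht₁ ht ht₂
      (fun u hu => sub_pos.mpr (hbelow₁ u hu)) (fun u hu => sub_neg.mpr (habove u hu))
      (fun u hu => sub_pos.mpr (hbelow₂ u hu)) hq
  have hsub : uIcc 0 q ⊆ uIcc 0 1 := uIcc_subset_uIcc_left (by
    rw [uIcc_of_le zero_le_one]; exact Ioo_subset_Icc_self hq)
  have hweight : ContinuousOn (fun u : ℝ => 1 - u / q) (uIcc 0 q) := by fun_prop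
  have hdiff : (∫ u in (0:ℝ)..q, (1 - u / q) * betaDensity β (y * β) u)
      - ∫ u in (0:ℝ)..q, (1 - u / q) * betaDensity α (y * α) u
      = q⁻¹ * ∫ u in (0:ℝ)..q, (q - u) * h u := by
    rw [← integral_sub ((hiβ.mono_set hsub).continuousOn_mul hweight)
      ((hiα.mono_set hsub).continuousOn_mul hweight), ← intervalIntegral.integral_const_mul]
    congr 1 with u
    have := hq.1.ne'
    simp only [h]
    field_simp
  have := mul_pos (inv_pos.mpr hq.1) hpos
  linarith

lemma alphaOf_pos {m v : ℝ} (hm : m ∈ Ioo 0 1) (hv : v ∈ Ioo 0 (m * (1 - m))) :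
    0 < alphaOf m v := by
  have : m < m ^ 2 * (1 - m) / v := by
    rw [lt_div_iff₀ hv.1]
    nlinarith [hm.1, hv.2]
  rw [alphaOf]
  linarith

lemma alphaOf_strictAntiOn {m : ℝ} (hm : m ∈ Ioo 0 1) : StrictAntiOn (alphaOf m) (Ioi 0) :=
  fun _ hv₁ _ _ hv => sub_lt_sub_right
    (div_lt_div_of_pos_left (mul_pos (pow_pos hm.1 2) (sub_pos.mpr hm.2)) hv₁ hv) m

/-- analytic core of Proposition 2: fix `m ∈ (0,1)`, `q ∈ (0,1)`,
set `y = (1-m)/m`. For `v ∈ (0, m(1-m))`, with `α(v) = m²(1-m)/v - m`, the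
beta-approximated data offloading ratio
`R(v) = 1 - (1/B(α(v), yα(v))) ∫₀^q (1 - u/q) u^(α(v)-1) (1-u)^(yα(v)-1) du`
is strictly decreasing in `v` on `(0, m(1-m))`. -/
theorem offloading_ratio_decreases_with_variance
    (m q : ℝ) (hm : m ∈ Set.Ioo (0:ℝ) 1) (hq : q ∈ Set.Ioo (0:ℝ) 1) :
    StrictAntiOn (fun v : ℝ =>
      1 - (1 / eulerBeta (alphaOf m v) (((1 - m) / m) * alphaOf m v)) *
        ∫ u in (0:ℝ)..q,
          (1 - u / q) * u ^ (alphaOf m v - 1)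
            * (1 - u) ^ (((1 - m) / m) * alphaOf m v - 1))
      (Set.Ioo 0 (m * (1 - m))) := by
  intro v₁ hv₁ v₂ hv₂ hv
  simp only [← integral_mul_betaDensity (fun u => 1 - u / q)]
  exact sub_lt_sub_left (integral_mul_betaDensity_lt_of_lt (div_pos (sub_pos.mpr hm.2) hm.1)
    (alphaOf_pos hm hv₂) (alphaOf_strictAntiOn hm hv₁.1 hv₂.1 hv) hq) 1
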